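/- Let F, G : ℝ⁴ → ℝ be smooth functions of (w, z, x, y), and define p := F_y, q := −(F_x + G_y)/2, r := G_x, together with m := p_z − q_w + p q_x − q p_x + q q_y − r p_y and n := q_z − r_w + q r_y − r q_y + p r_x − q q_x. Then: (i) the first equation of (SD), p_{xx} + 2q_{xy} + r_{yy} = 0, holds identically; and (ii) the remaining two equations of (SD), m_x + n_y = 0 and m_z − q m_x − r m_y + (q_x + r_y) m = n_w − p n_x − q n_y + (p_x + q_y) n, hold at every point if and only if (F, G) satisfies the system (sd_3rd): ∂_x(Q(F)) − ∂_y(Q(G)) = 0 and (∂_w − F_y∂_x + G_y∂_y)Q(G) + (∂_z + F_x∂_x − G_x∂_y)Q(F) = 0, where Q = ∂_w∂_x + ∂_z∂_y − F_y∂_x² − G_x∂_y² + (F_x + G_y)∂_x∂_y. -/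

import Mathlib

noncomputable section

/-- Partial derivative of `f` along the `i`-th coordinate direction on `ℝⁿ`.
Coordinates on `ℝ⁴` are `(w, z, x, y) = (0, 1, 2, 3)`. -/
def pd {n : ℕ} (i : Fin n) (f : (Fin n → ℝ) → ℝ) : (Fin n → ℝ) → ℝ :=
  fun x => fderiv ℝ f x (Pi.single i 1)

/-- `m = p_z − q_w + p q_x − q p_x + q q_y − r p_y`. -/
def mSD (p q r : (Fin 4 → ℝ) → ℝ) : (Fin 4 → ℝ) → ℝ :=
  fun x =>
    pd 1 p x - pd 0 q x + p x * pd 2 q x - q x * pd 2 p x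
      + q x * pd 3 q x - r x * pd 3 p x

/-- `n = q_z − r_w + q r_y − r q_y + p r_x − q q_x`. -/
def nSD (p q r : (Fin 4 → ℝ) → ℝ) : (Fin 4 → ℝ) → ℝ :=
  fun x =>
    pd 1 q x - pd 0 r x + q x * pd 3 r x - r x * pd 3 q x
      + p x * pd 2 r x - q x * pd 2 q x

/-- First equation of system (SD): `p_{xx} + 2q_{xy} + r_{yy} = 0`. -/
def SDeq1 (p q r : (Fin 4 → ℝ) → ℝ) : Prop :=
  ∀ x : Fin 4 → ℝ, pd 2 (pd 2 p) x + 2 * pd 2 (pd 3 q) x + pd 3 (pd 3 r) x = 0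

/-- Second equation of system (SD): `m_x + n_y = 0`. -/
def SDeq2 (p q r : (Fin 4 → ℝ) → ℝ) : Prop :=
  ∀ x : Fin 4 → ℝ, pd 2 (mSD p q r) x + pd 3 (nSD p q r) x = 0

/-- Third equation of system (SD):
`m_z − q m_x − r m_y + (q_x + r_y)m = n_w − p n_x − q n_y + (p_x + q_y)n`. -/
def SDeq3 (p q r : (Fin 4 → ℝ) → ℝ) : Prop :=
  ∀ x : Fin 4 → ℝ,
    pd 1 (mSD p q r) x - q x * pd 2 (mSD p q r) x - r x * pd 3 (mSD p q r) x
        + (pd 2 q x + pd 3 r x) * mSD p q r x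
      = pd 0 (nSD p q r) x - p x * pd 2 (nSD p q r) x - q x * pd 3 (nSD p q r) x
        + (pd 2 p x + pd 3 q x) * nSD p q r x

/-- The operator `Q = ∂_w∂_x + ∂_z∂_y − F_y∂_x² − G_x∂_y² + (F_x + G_y)∂_x∂_y`
applied to `h`. -/
def Qop (F G h : (Fin 4 → ℝ) → ℝ) : (Fin 4 → ℝ) → ℝ :=
  fun x =>
    pd 0 (pd 2 h) x + pd 1 (pd 3 h) x - pd 3 F x * pd 2 (pd 2 h) x
      - pd 2 G x * pd 3 (pd 3 h) x + (pd 2 F x + pd 3 G x) * pd 2 (pd 3 h) x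

/-- First equation of system (sd_3rd): `∂_x(Q(F)) − ∂_y(Q(G)) = 0`. -/
def sd3rd1 (F G : (Fin 4 → ℝ) → ℝ) : Prop :=
  ∀ x : Fin 4 → ℝ, pd 2 (Qop F G F) x - pd 3 (Qop F G G) x = 0

/-- Second equation of system (sd_3rd):
`(∂_w − F_y∂_x + G_y∂_y)Q(G) + (∂_z + F_x∂_x − G_x∂_y)Q(F) = 0`. -/
def sd3rd2 (F G : (Fin 4 → ℝ) → ℝ) : Prop :=
  ∀ x : Fin 4 → ℝ,
    (pd 0 (Qop F G G) x - pd 3 F x * pd 2 (Qop F G G) x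
        + pd 3 G x * pd 3 (Qop F G G) x)
      + (pd 1 (Qop F G F) x + pd 2 F x * pd 2 (Qop F G F) x
        - pd 2 G x * pd 3 (Qop F G F) x) = 0

/-!
With `p = F_y`, `q = −(F_x + G_y)/2`, `r = G_x` the first (SD) equation reads
`F_yxx − (F_x + G_y)_xy + G_xyy = 0`, true by symmetry of mixed partials. For
`Φ = F_z + G_w + q² − pr` one has `2m = Q(F) + Φ_y` and `2n = −Q(G) − Φ_x`, so
`2(m_x + n_y) = ∂_x Q(F) − ∂_y Q(G)`: the second (SD) equation is the first (sd_3rd) one.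
Expanding the third (SD) equation turns it into
`(∂_z − q∂_x − r∂_y)Q(F) + (∂_w − p∂_x − q∂_y)Q(G) = 0`, whose left side differs from that of
the second (sd_3rd) equation by `(G_y − F_x)/2 · (∂_x Q(F) − ∂_y Q(G))`.
-/

section PartialDerivatives

variable {n : ℕ} {f g : (Fin n → ℝ) → ℝ} {i : Fin n}

@[fun_prop]
theorem contDiff_pd (i : Fin n) (hf : ContDiff ℝ (⊤ : ℕ∞) f) :
    ContDiff ℝ (⊤ : ℕ∞) (pd i f) :=
  (contDiff_infty_iff_fderiv.mp hf).2.clm_apply contDiff_const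

@[fun_prop]
theorem differentiable_pd (i : Fin n) (hf : ContDiff ℝ (⊤ : ℕ∞) f) :
    Differentiable ℝ (pd i f) :=
  (contDiff_pd i hf).differentiable (by simp)

theorem pd_add (hf : Differentiable ℝ f) (hg : Differentiable ℝ g) :
    pd i (fun x => f x + g x) = fun x => pd i f x + pd i g x := by
  funext x
  simp only [pd, fderiv_fun_add (hf x) (hg x), add_apply]

theorem pd_sub (hf : Differentiable ℝ f) (hg : Differentiable ℝ g) :
    pd i (fun x => f x - g x) = fun x => pd i f x - pd i g x := by
  funext x
  simp only [pd, fderiv_fun_sub (hf x) (hg x), sub_apply]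

theorem pd_neg : pd i (fun x => -f x) = fun x => -pd i f x := by
  funext x
  simp only [pd, fderiv_fun_neg, neg_apply]

theorem pd_mul (hf : Differentiable ℝ f) (hg : Differentiable ℝ g) :
    pd i (fun x => f x * g x) = fun x => f x * pd i g x + g x * pd i f x := by
  funext x
  simp only [pd, fderiv_fun_mul (hf x) (hg x), add_apply, smul_apply, smul_eq_mul]

theorem pd_div_const (c : ℝ) : pd i (fun x => f x / c) = fun x => pd i f x / c := by
  have hsmul : (fun x => f x / c) = c⁻¹ • f := by
    funext x
    simp [div_eq_inv_mul]
  funext x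
  rw [pd, pd, hsmul, fderiv_const_smul_field]
  simp [div_eq_inv_mul]

theorem pd_pd_eq_fderiv_fderiv {x : Fin n → ℝ} (hdiff : DifferentiableAt ℝ (fderiv ℝ f) x)
    (i j : Fin n) :
    pd i (pd j f) x = fderiv ℝ (fderiv ℝ f) x (Pi.single i 1) (Pi.single j 1) := by
  change fderiv ℝ (fun y => fderiv ℝ f y (Pi.single j 1)) x (Pi.single i 1) = _
  simp [fderiv_clm_apply hdiff (differentiableAt_const _)]

theorem pd_comm (hf : ContDiff ℝ (⊤ : ℕ∞) f) (i j : Fin n) :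
    pd i (pd j f) = pd j (pd i f) := by
  have hsmooth : minSmoothness ℝ 2 ≤ ((⊤ : ℕ∞) : WithTop ℕ∞) := by
    rw [minSmoothness_of_isRCLikeNormedField]
    exact WithTop.coe_le_coe.2 le_top
  funext x
  have hdiff : DifferentiableAt ℝ (fderiv ℝ f) x :=
    (contDiff_infty_iff_fderiv.mp hf).2.differentiable (by simp) x
  rw [pd_pd_eq_fderiv_fderiv hdiff, pd_pd_eq_fderiv_fderiv hdiff]
  exact hf.contDiffAt.isSymmSndFDerivAt hsmooth _ _

/-- The hypothesis `j < i` orients `pd_comm`, so that `simp` can use it to sort mixed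
partials without looping. -/
theorem pd_pd_of_lt (hf : ContDiff ℝ (⊤ : ℕ∞) f) {i j : Fin n} (_ : j < i) :
    pd i (pd j f) = pd j (pd i f) :=
  pd_comm hf i j

end PartialDerivatives

section SD

variable {F G : (Fin 4 → ℝ) → ℝ}

def qSD (F G : (Fin 4 → ℝ) → ℝ) : (Fin 4 → ℝ) → ℝ :=
  fun x => -(pd 2 F x + pd 3 G x) / 2

def phiSD (F G : (Fin 4 → ℝ) → ℝ) : (Fin 4 → ℝ) → ℝ :=
  fun x => pd 1 F x + pd 0 G x + qSD F G x * qSD F G x - pd 3 F x * pd 2 G x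

/-- `(∂_z − q∂_x − r∂_y)Q(F) + (∂_w − p∂_x − q∂_y)Q(G) = 0`. -/
def SDeq3Qop (F G : (Fin 4 → ℝ) → ℝ) : Prop :=
  ∀ x : Fin 4 → ℝ,
    (pd 1 (Qop F G F) x - qSD F G x * pd 2 (Qop F G F) x - pd 2 G x * pd 3 (Qop F G F) x)
      + (pd 0 (Qop F G G) x - pd 3 F x * pd 2 (Qop F G G) x - qSD F G x * pd 3 (Qop F G G) x)
      = 0

@[fun_prop]
theorem contDiff_qSD (hF : ContDiff ℝ (⊤ : ℕ∞) F) (hG : ContDiff ℝ (⊤ : ℕ∞) G) :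
    ContDiff ℝ (⊤ : ℕ∞) (qSD F G) := by
  unfold qSD
  fun_prop

@[fun_prop]
theorem contDiff_phiSD (hF : ContDiff ℝ (⊤ : ℕ∞) F) (hG : ContDiff ℝ (⊤ : ℕ∞) G) :
    ContDiff ℝ (⊤ : ℕ∞) (phiSD F G) := by
  unfold phiSD
  fun_prop

@[fun_prop]
theorem contDiff_Qop {h : (Fin 4 → ℝ) → ℝ} (hF : ContDiff ℝ (⊤ : ℕ∞) F)
    (hG : ContDiff ℝ (⊤ : ℕ∞) G) (hh : ContDiff ℝ (⊤ : ℕ∞) h) :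
    ContDiff ℝ (⊤ : ℕ∞) (Qop F G h) := by
  unfold Qop
  fun_prop

theorem SDeq1_pd_qSD_pd (hF : ContDiff ℝ (⊤ : ℕ∞) F) (hG : ContDiff ℝ (⊤ : ℕ∞) G) :
    SDeq1 (pd 3 F) (qSD F G) (pd 2 G) := by
  intro x
  unfold qSD
  simp (disch := fun_prop) only [pd_div_const, pd_neg, pd_add]
  simp (disch := first | decide | fun_prop) only [pd_pd_of_lt]
  ring

theorem two_mul_mSD (hF : ContDiff ℝ (⊤ : ℕ∞) F) (hG : ContDiff ℝ (⊤ : ℕ∞) G)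
    (x : Fin 4 → ℝ) :
    2 * mSD (pd 3 F) (qSD F G) (pd 2 G) x = Qop F G F x + pd 3 (phiSD F G) x := by
  unfold mSD Qop phiSD qSD
  simp (disch := fun_prop) only [pd_div_const, pd_neg, pd_add, pd_sub, pd_mul]
  simp (disch := first | decide | fun_prop) only [pd_pd_of_lt]
  ring

theorem two_mul_nSD (hF : ContDiff ℝ (⊤ : ℕ∞) F) (hG : ContDiff ℝ (⊤ : ℕ∞) G)
    (x : Fin 4 → ℝ) :
    2 * nSD (pd 3 F) (qSD F G) (pd 2 G) x = -(Qop F G G x + pd 2 (phiSD F G) x) := by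
  unfold nSD Qop phiSD qSD
  simp (disch := fun_prop) only [pd_div_const, pd_neg, pd_add, pd_sub, pd_mul]
  simp (disch := first | decide | fun_prop) only [pd_pd_of_lt]
  ring

theorem pd_mSD_add_pd_nSD (hF : ContDiff ℝ (⊤ : ℕ∞) F) (hG : ContDiff ℝ (⊤ : ℕ∞) G)
    (x : Fin 4 → ℝ) :
    pd 2 (mSD (pd 3 F) (qSD F G) (pd 2 G)) x + pd 3 (nSD (pd 3 F) (qSD F G) (pd 2 G)) x
      = (pd 2 (Qop F G F) x - pd 3 (Qop F G G) x) / 2 := by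
  have hm :
      mSD (pd 3 F) (qSD F G) (pd 2 G) = fun x => (Qop F G F x + pd 3 (phiSD F G) x) / 2 :=
    funext fun x => by rw [← two_mul_mSD hF hG x]; ring
  have hn :
      nSD (pd 3 F) (qSD F G) (pd 2 G) = fun x => -(Qop F G G x + pd 2 (phiSD F G) x) / 2 :=
    funext fun x => by rw [← two_mul_nSD hF hG x]; ring
  rw [hm, hn]
  simp (disch := fun_prop (disch := simp)) only [pd_div_const, pd_neg, pd_add]
  rw [pd_comm (contDiff_phiSD hF hG) 2 3]
  ring

theorem SDeq2_pd_qSD_pd_iff (hF : ContDiff ℝ (⊤ : ℕ∞) F) (hG : ContDiff ℝ (⊤ : ℕ∞) G) :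
    SDeq2 (pd 3 F) (qSD F G) (pd 2 G) ↔ sd3rd1 F G :=
  forall_congr' fun x => by
    rw [pd_mSD_add_pd_nSD hF hG x, div_eq_zero_iff, or_iff_left two_ne_zero]

theorem SDeq3_pd_qSD_pd_iff (hF : ContDiff ℝ (⊤ : ℕ∞) F) (hG : ContDiff ℝ (⊤ : ℕ∞) G) :
    SDeq3 (pd 3 F) (qSD F G) (pd 2 G) ↔ SDeq3Qop F G := by
  refine forall_congr' fun x => ?_
  unfold mSD nSD Qop qSD
  simp (disch := fun_prop) only [pd_div_const, pd_neg, pd_add, pd_sub, pd_mul]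
  simp (disch := first | decide | fun_prop) only [pd_pd_of_lt]
  constructor <;> intro h <;> linear_combination h

theorem SDeq3Qop_iff_sd3rd2 (h1 : sd3rd1 F G) : SDeq3Qop F G ↔ sd3rd2 F G := by
  refine forall_congr' fun x => ?_
  unfold qSD
  constructor <;> intro h
  · linear_combination h - (pd 3 G x - pd 2 F x) / 2 * h1 x
  · linear_combination h + (pd 3 G x - pd 2 F x) / 2 * h1 x

end SD

/-- For `p = F_y`, `q = −(F_x + G_y)/2`, `r = G_x` the first (SD) equation holds
identically, and the remaining two (SD) equations hold iff `(F, G)` solves the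
system (sd_3rd). -/
theorem SD_reduces_to_sd3rd
    (F G : (Fin 4 → ℝ) → ℝ)
    (hF : ContDiff ℝ (⊤ : ℕ∞) F)
    (hG : ContDiff ℝ (⊤ : ℕ∞) G) :
    SDeq1 (pd 3 F) (fun x => -(pd 2 F x + pd 3 G x) / 2) (pd 2 G) ∧
    ((SDeq2 (pd 3 F) (fun x => -(pd 2 F x + pd 3 G x) / 2) (pd 2 G) ∧
      SDeq3 (pd 3 F) (fun x => -(pd 2 F x + pd 3 G x) / 2) (pd 2 G)) ↔
     (sd3rd1 F G ∧ sd3rd2 F G)) :=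
  ⟨SDeq1_pd_qSD_pd hF hG,
    (and_congr_left' (SDeq2_pd_qSD_pd_iff hF hG)).trans <| and_congr_right fun h1 =>
      (SDeq3_pd_qSD_pd_iff hF hG).trans (SDeq3Qop_iff_sd3rd2 h1)⟩
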